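/- Let p be an odd prime, θ = 2π/p, and t > 1 a real number. Define the 3×3 real matrices A_a = [[cos θ, −sin θ, 0],[sin θ, cos θ, 0],[1−cos θ−sin θ, 1+sin θ−cos θ, 1]] and A_$ = [[1,0,0],[0,t,0],[0,1−t,1]], and for l ≥ 0 let v_f(l) = A_$ · (A_a)^l · (1,0,0)ᵀ. Then the acceptance probability |v_f(l)[1]| / (|v_f(l)[1]| + |v_f(l)[2]| + |v_f(l)[3]|) equals 1 when p divides l, and is strictly less than cot(π/p)/t when p does not divide l. (Hence the language MOD_p = {a^{jp} : j ∈ ℕ} is recognized by a 3-state affine finite automaton with negative one-sided error bound cot(π/p)/t.) -/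

import Mathlib

/-!
Powers of the rotation block compose, so `A_a ^ l` is the affine operator of the angle `α = l θ`,
and the final state is `(cos α, t sin α, 1 - cos α - t sin α)`. If `p ∣ l` then `α ∈ 2πℤ` and all
weight sits on the accepting state. Otherwise `α = 2lπ/p` with `p ∤ 2l`, so modulo `π` the angle lies
in `[π/p, π - π/p]`; hence `|cos α| ≤ cos (π/p)` and `|sin α| ≥ sin (π/p)`, and the acceptance
probability is at most `|cos α| / (|cos α| + t |sin α|) ≤ C / (C + t S) < C / (t S)` with
`C = cos (π/p)`, `S = sin (π/p)`.
-/

open Matrix Real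

/-- The affine operator applied on each input symbol `a` (rotation by `θ`,
augmented to an affine operator). -/
noncomputable def AaM (θ : ℝ) : Matrix (Fin 3) (Fin 3) ℝ :=
  !![Real.cos θ, -Real.sin θ, 0;
     Real.sin θ, Real.cos θ, 0;
     1 - Real.cos θ - Real.sin θ, 1 + Real.sin θ - Real.cos θ, 1]

/-- The affine operator applied on the right end-marker `$`. -/
noncomputable def AdollarM (t : ℝ) : Matrix (Fin 3) (Fin 3) ℝ :=
  !![1, 0, 0; 0, t, 0; 0, 1 - t, 1]

/-- The final affine state on the input `a^l` (with `θ = 2π/p`). -/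
noncomputable def vfM (p : ℕ) (t : ℝ) (l : ℕ) : Fin 3 → ℝ :=
  (AdollarM t * AaM (2 * Real.pi / p) ^ l) *ᵥ ![1, 0, 0]

/-- The acceptance probability (accepting state: the first state). -/
noncomputable def probM (p : ℕ) (t : ℝ) (l : ℕ) : ℝ :=
  |vfM p t l 0| / (|vfM p t l 0| + |vfM p t l 1| + |vfM p t l 2|)

theorem AaM_zero : AaM 0 = 1 := by
  ext i j
  fin_cases i <;> fin_cases j <;> simp [AaM]

theorem AaM_add (x y : ℝ) : AaM (x + y) = AaM x * AaM y := by
  ext i j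
  fin_cases i <;> fin_cases j <;>
    simp [AaM, Matrix.mul_apply, Fin.sum_univ_three, cos_add, sin_add] <;> ring

theorem AaM_pow (x : ℝ) (n : ℕ) : AaM x ^ n = AaM (n * x) := by
  induction n with
  | zero => simp [AaM_zero]
  | succ n ih => rw [pow_succ, ih, ← AaM_add]; push_cast; ring_nf

theorem vfM_eq (p : ℕ) (t : ℝ) (l : ℕ) :
    vfM p t l = ![cos (l * (2 * π / p)), t * sin (l * (2 * π / p)),
      1 - cos (l * (2 * π / p)) - t * sin (l * (2 * π / p))] := by
  rw [vfM, AaM_pow]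
  ext i
  fin_cases i <;>
    simp [AaM, AdollarM, Matrix.mulVec, Matrix.mul_apply, dotProduct, Fin.sum_univ_three]
  ring

theorem probM_eq (p : ℕ) (t : ℝ) (l : ℕ) :
    probM p t l = |cos (l * (2 * π / p))| / (|cos (l * (2 * π / p))| +
      |t * sin (l * (2 * π / p))| + |1 - cos (l * (2 * π / p)) - t * sin (l * (2 * π / p))|) := by
  simp only [probM, vfM_eq]
  rfl

theorem abs_cos_add_int_mul_pi (x : ℝ) (n : ℤ) : |cos (x + n * π)| = |cos x| := by
  rw [cos_add_int_mul_pi, abs_mul, abs_neg_one_zpow, one_mul]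

theorem abs_cos_le_cos_of_mem_Icc {a y : ℝ} (ha : 0 ≤ a) (hy : y ∈ Set.Icc a (π - a)) :
    |cos y| ≤ cos a := by
  obtain ⟨hay, hya⟩ := hy
  refine abs_le.2 ⟨?_, cos_le_cos_of_nonneg_of_le_pi ha (by linarith) hay⟩
  have := cos_le_cos_of_nonneg_of_le_pi ha (by linarith) (by linarith : a ≤ π - y)
  rw [cos_pi_sub] at this
  linarith

theorem abs_cos_int_mul_pi_div_le (p : ℕ) (k : ℤ) (hk : ¬ (p : ℤ) ∣ k) :
    |cos (k * π / p)| ≤ cos (π / p) := by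
  rcases p.eq_zero_or_pos with rfl | hp
  · simp
  have hpZ : (0 : ℤ) < p := by exact_mod_cast hp
  have hpR : (0 : ℝ) < p := by exact_mod_cast hp
  set m := k % p
  have hm_pos : 0 < m :=
    (Int.emod_nonneg k hpZ.ne').lt_of_ne fun h => hk (Int.dvd_of_emod_eq_zero h.symm)
  have hm_lt : m < p := Int.emod_lt_of_pos k hpZ
  have hm1 : (1 : ℝ) ≤ m := by exact_mod_cast hm_pos
  have hmp : (m : ℝ) + 1 ≤ p := by exact_mod_cast hm_lt
  -- `k π / p` is `(k mod p) π / p` up to a multiple of `π`, and `1 ≤ k mod p ≤ p - 1`.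
  have hk_eq : k * π / p = m * π / p + (k / p : ℤ) * π := by
    have : (k : ℝ) = m + p * (k / p : ℤ) := by exact_mod_cast (Int.emod_add_mul_ediv k p).symm
    rw [this]; field_simp
  rw [hk_eq, abs_cos_add_int_mul_pi]
  refine abs_cos_le_cos_of_mem_Icc (by positivity) ⟨?_, ?_⟩
  · rw [div_le_div_iff_of_pos_right hpR]; nlinarith [pi_pos]
  · rw [div_le_iff₀ hpR, sub_mul, div_mul_cancel₀ _ hpR.ne']; nlinarith [pi_pos]

theorem abs_sin_le_abs_sin_of_abs_cos_le {x y : ℝ} (h : |cos y| ≤ |cos x|) :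
    |sin x| ≤ |sin y| := by
  rw [← sq_le_sq, sin_sq, sin_sq, sub_le_sub_iff_left, sq_le_sq]
  exact h

-- `x / (x + y)` increases in `x` and decreases in `y`.
theorem abs_div_abs_add_abs_add_abs_lt {c s r C S t : ℝ} (hC : 0 < C) (hS : 0 < S) (ht : 0 < t)
    (hc : |c| ≤ C) (hs : S ≤ |s|) :
    |c| / (|c| + |t * s| + |r|) < C / S / t := by
  have hts : t * S ≤ |t * s| := by rw [abs_mul, abs_of_pos ht]; gcongr
  have hden : 0 < |c| + |t * s| := by linarith [abs_nonneg c, mul_pos ht hS]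
  calc |c| / (|c| + |t * s| + |r|) ≤ |c| / (|c| + |t * s|) :=
        div_le_div_of_nonneg_left (abs_nonneg c) hden (by linarith [abs_nonneg r])
    _ ≤ C / (C + t * S) := by
        rw [div_le_div_iff₀ hden (by positivity)]
        nlinarith [mul_le_mul hc hts (by positivity) hC.le]
    _ < C / (S * t) := div_lt_div_of_pos_left hC (by positivity) (by linarith [mul_comm S t])
    _ = C / S / t := (div_div C S t).symm

theorem probM_eq_one_of_dvd {p l : ℕ} (hp : p ≠ 0) (t : ℝ) (hl : p ∣ l) : probM p t l = 1 := by
  obtain ⟨j, rfl⟩ := hl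
  have hα : ((p * j : ℕ) : ℝ) * (2 * π / p) = j * (2 * π) := by
    push_cast; field_simp
  rw [probM_eq, hα, cos_nat_mul_two_pi,
    show (j : ℝ) * (2 * π) = (2 * j : ℕ) * π by push_cast; ring, sin_nat_mul_pi]
  norm_num

theorem mod_recognized_with_one_sided_error_general (p : ℕ) (hodd : Odd p)
    (t : ℝ) (ht : 1 < t) (l : ℕ) :
    (p ∣ l → probM p t l = 1) ∧
    (¬ p ∣ l → probM p t l < Real.cot (Real.pi / p) / t) := by
  refine ⟨probM_eq_one_of_dvd hodd.pos.ne' t, fun hl => ?_⟩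
  have hp : (2 : ℝ) < p := by
    have hp_odd : p % 2 = 1 := Nat.odd_iff.mp hodd
    have hp_ne_one : p ≠ 1 := by rintro rfl; exact hl (one_dvd l)
    exact_mod_cast (by omega : 2 < p)
  have h2l : ¬ (p : ℤ) ∣ 2 * l := by
    exact_mod_cast fun h => hl (hodd.coprime_two_right.dvd_of_dvd_mul_left h)
  have hα : (l : ℝ) * (2 * π / p) = ((2 * l : ℤ) : ℝ) * π / p := by push_cast; ring
  have hθ_pos : 0 < π / p := by positivity
  have hθ_lt : π / p < π / 2 := div_lt_div_of_pos_left pi_pos two_pos hp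
  have hC : 0 < cos (π / p) := cos_pos_of_mem_Ioo ⟨by linarith, hθ_lt⟩
  have hS : 0 < sin (π / p) := sin_pos_of_pos_of_lt_pi hθ_pos (by linarith [pi_pos])
  have hcos := abs_cos_int_mul_pi_div_le p (2 * l) h2l
  have hsin : sin (π / p) ≤ |sin (((2 * l : ℤ) : ℝ) * π / p)| :=
    abs_of_pos hS ▸ abs_sin_le_abs_sin_of_abs_cos_le (by rwa [abs_of_pos hC])
  rw [probM_eq, hα, cot_eq_cos_div_sin]
  exact abs_div_abs_add_abs_add_abs_lt hC hS (by linarith) hcos hsin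

/-- The acceptance probability equals `1` when `p ∣ l`, and is strictly less than
`cot(π/p)/t` when `p ∤ l`: the language `MOD_p = {a^{jp} : j ∈ ℕ}` is recognized by a
3-state AfA with negative one-sided error bound `cot(π/p)/t`. -/
theorem mod_recognized_with_one_sided_error (p : ℕ) (hp : p.Prime) (hodd : Odd p)
    (t : ℝ) (ht : 1 < t) (l : ℕ) :
    (p ∣ l → probM p t l = 1) ∧
    (¬ p ∣ l → probM p t l < Real.cot (Real.pi / p) / t) :=
  mod_recognized_with_one_sided_error_general p hodd t ht l
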